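/- For x,y,z,w ∈ ℝ let Q(x,y,z,w) be the binary cubic with coefficients (x³/3 − xz², x²y − 2xzw − yz², xy² − xw² − 2yzw, y³/3 − yw²). Then a coefficient vector q = (q₁,q₂,q₃,q₄) ∈ ℝ⁴ lies in the image of Q (over all real x,y,z,w) if and only if either Δ₃(q) > 0, or q is the cube of a real linear form, i.e. there exist α,β ∈ ℝ with (q₁,q₂,q₃,q₄) = (α³, 3α²β, 3αβ², β³). -/

import Mathlib

noncomputable section

/-- The discriminant of a binary cubic `q 0 • u₁³ + q 1 • u₁²u₂ + q 2 • u₁u₂² + q 3 • u₂³`. -/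
def disc3 (q : Fin 4 → ℝ) : ℝ :=
  q 1 ^ 2 * q 2 ^ 2 - 4 * q 0 * q 2 ^ 3 - 4 * q 1 ^ 3 * q 3 +
    18 * q 0 * q 1 * q 2 * q 3 - 27 * q 0 ^ 2 * q 3 ^ 2

/-- The coefficient vector of the binary cubic
`Q(x,y,z,w) = (1/3)(x u₁ + y u₂)³ − (x u₁ + y u₂)(z u₁ + w u₂)²`. -/
def Qcoeff (x y z w : ℝ) : Fin 4 → ℝ :=
  ![x ^ 3 / 3 - x * z ^ 2, x ^ 2 * y - 2 * x * z * w - y * z ^ 2,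
    x * y ^ 2 - x * w ^ 2 - 2 * y * z * w, y ^ 3 / 3 - y * w ^ 2]


/-!
With `L = x u₁ + y u₂` and `M = z u₁ + w u₂` one has `Q = (1/3) L (L - √3 M) (L + √3 M)` and
`Δ₃(Q) = (4/3) (x w - y z)⁶`. So `Q` is a product of three pairwise independent linear forms when
`L, M` are independent, and a multiple of `L³`, hence a cube, otherwise.

Conversely, after a shear making the leading coefficient nonzero, a cubic with `Δ₃ > 0` has three
distinct real roots (intermediate value theorem on the depressed cubic), so it is `k ℓ₁ ℓ₂ ℓ₃` with
pairwise independent `ℓᵢ`. Rescaling the `ℓᵢ` so that `ℓ₁ = ℓ₂ + ℓ₃`, the forms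
`L = (ℓ₂ + ℓ₃) / 2` and `√3 M = (ℓ₃ - ℓ₂) / 2` give `k ℓ₁ ℓ₂ ℓ₃` up to a factor that is absorbed
by scaling `(x, y, z, w)` by a cube root.
-/

open Set

lemma exists_pow_three_eq (v : ℝ) : ∃ r : ℝ, r ^ 3 = v := by
  set b := |v| + 1
  have hb : b ≤ b ^ 3 := le_self_pow₀ (by linarith [abs_nonneg v]) (by norm_num)
  have hv : v ∈ Icc ((-b) ^ 3) (b ^ 3) := by
    constructor <;> linarith [neg_abs_le v, le_abs_self v, show (-b) ^ 3 = -b ^ 3 by ring]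
  obtain ⟨r, -, hr⟩ :=
    intermediate_value_Icc (by linarith [abs_nonneg v] : -b ≤ b) (continuous_pow 3).continuousOn hv
  exact ⟨r, hr⟩

lemma exists_three_roots_depressed_cubic (p Q : ℝ) (h : 0 < -4 * p ^ 3 - 27 * Q ^ 2) :
    ∃ t₁ t₂ t₃ : ℝ, t₁ < t₂ ∧ t₂ < t₃ ∧
      t₁ ^ 3 + p * t₁ + Q = 0 ∧ t₂ ^ 3 + p * t₂ + Q = 0 ∧ t₃ ^ 3 + p * t₃ + Q = 0 := by
  have hp : 0 < -p / 3 := by nlinarith [sq_nonneg Q, sq_nonneg p]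
  obtain ⟨s, hs, rfl⟩ : ∃ s : ℝ, 0 < s ∧ p = -3 * s ^ 2 :=
    ⟨√(-p / 3), Real.sqrt_pos.2 hp, by rw [Real.sq_sqrt hp.le]; ring⟩
  -- At `-2s, -s, s, 2s` the cubic takes the values `Q - 2s³, Q + 2s³, Q - 2s³, Q + 2s³`.
  have hQ : -(2 * s ^ 3) < Q ∧ Q < 2 * s ^ 3 :=
    abs_lt_of_sq_lt_sq' (by linarith) (by positivity)
  let f : ℝ → ℝ := fun t ↦ t ^ 3 + -3 * s ^ 2 * t + Q
  have hf : Continuous f := by fun_prop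
  have h₁ : (0 : ℝ) ∈ Ioo (f (-(2 * s))) (f (-s)) := by simp only [f]; constructor <;> nlinarith
  have h₂ : (0 : ℝ) ∈ Ioo (f s) (f (-s)) := by simp only [f]; constructor <;> nlinarith
  have h₃ : (0 : ℝ) ∈ Ioo (f s) (f (2 * s)) := by simp only [f]; constructor <;> nlinarith
  obtain ⟨t₁, ⟨-, ht₁⟩, hf₁⟩ := intermediate_value_Ioo (by linarith) hf.continuousOn h₁
  obtain ⟨t₂, ⟨ht₂, ht₂'⟩, hf₂⟩ := intermediate_value_Ioo' (by linarith) hf.continuousOn h₂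
  obtain ⟨t₃, ⟨ht₃, -⟩, hf₃⟩ := intermediate_value_Ioo (by linarith) hf.continuousOn h₃
  exact ⟨t₁, t₂, t₃, by linarith, by linarith, hf₁, hf₂, hf₃⟩

lemma exists_three_roots_monic_cubic (a b c : ℝ)
    (h : 0 < a ^ 2 * b ^ 2 - 4 * b ^ 3 - 4 * a ^ 3 * c + 18 * a * b * c - 27 * c ^ 2) :
    ∃ r₁ r₂ r₃ : ℝ, r₁ < r₂ ∧ r₂ < r₃ ∧ r₁ ^ 3 + a * r₁ ^ 2 + b * r₁ + c = 0 ∧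
      r₂ ^ 3 + a * r₂ ^ 2 + b * r₂ + c = 0 ∧ r₃ ^ 3 + a * r₃ ^ 2 + b * r₃ + c = 0 := by
  set p := b - a ^ 2 / 3
  set Q := c - a * b / 3 + 2 * a ^ 3 / 27
  have hshift (t : ℝ) : (t - a / 3) ^ 3 + a * (t - a / 3) ^ 2 + b * (t - a / 3) + c =
      t ^ 3 + p * t + Q := by ring
  obtain ⟨t₁, t₂, t₃, h₁₂, h₂₃, ht₁, ht₂, ht₃⟩ :=
    exists_three_roots_depressed_cubic p Q (by convert h using 1; ring)
  exact ⟨t₁ - a / 3, t₂ - a / 3, t₃ - a / 3, by linarith, by linarith,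
    by rw [hshift, ht₁], by rw [hshift, ht₂], by rw [hshift, ht₃]⟩

lemma quadratic_eq_zero_of_three_roots {R : Type*} [CommRing R] [IsDomain R] {A B C r₁ r₂ r₃ : R}
    (h₁₂ : r₁ ≠ r₂) (h₁₃ : r₁ ≠ r₃) (h₂₃ : r₂ ≠ r₃) (hr₁ : A * r₁ ^ 2 + B * r₁ + C = 0)
    (hr₂ : A * r₂ ^ 2 + B * r₂ + C = 0) (hr₃ : A * r₃ ^ 2 + B * r₃ + C = 0) :
    A = 0 ∧ B = 0 ∧ C = 0 := by
  have e₁₂ : (r₁ - r₂) * (A * (r₁ + r₂) + B) = 0 := by linear_combination hr₁ - hr₂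
  have e₁₃ : (r₁ - r₃) * (A * (r₁ + r₃) + B) = 0 := by linear_combination hr₁ - hr₃
  replace e₁₂ := (mul_eq_zero.1 e₁₂).resolve_left (sub_ne_zero.2 h₁₂)
  replace e₁₃ := (mul_eq_zero.1 e₁₃).resolve_left (sub_ne_zero.2 h₁₃)
  have hA : A = 0 := by
    have : (r₂ - r₃) * A = 0 := by linear_combination e₁₂ - e₁₃
    exact (mul_eq_zero.1 this).resolve_left (sub_ne_zero.2 h₂₃)
  have hB : B = 0 := by linear_combination e₁₂ - (r₁ + r₂) * hA
  exact ⟨hA, hB, by linear_combination hr₁ - r₁ ^ 2 * hA - r₁ * hB⟩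

lemma cubic_coeffs_eq_of_three_roots {R : Type*} [CommRing R] [IsDomain R] {a b c r₁ r₂ r₃ : R}
    (h₁₂ : r₁ ≠ r₂) (h₁₃ : r₁ ≠ r₃) (h₂₃ : r₂ ≠ r₃)
    (hr₁ : r₁ ^ 3 + a * r₁ ^ 2 + b * r₁ + c = 0) (hr₂ : r₂ ^ 3 + a * r₂ ^ 2 + b * r₂ + c = 0)
    (hr₃ : r₃ ^ 3 + a * r₃ ^ 2 + b * r₃ + c = 0) :
    a = -(r₁ + r₂ + r₃) ∧ b = r₁ * r₂ + r₁ * r₃ + r₂ * r₃ ∧ c = -(r₁ * r₂ * r₃) := by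
  -- The cubic minus `(t - r₁)(t - r₂)(t - r₃)` is a quadratic vanishing at the three roots.
  obtain ⟨hA, hB, hC⟩ := quadratic_eq_zero_of_three_roots (A := a + (r₁ + r₂ + r₃))
    (B := b - (r₁ * r₂ + r₁ * r₃ + r₂ * r₃)) (C := c + r₁ * r₂ * r₃) h₁₂ h₁₃ h₂₃
    (by linear_combination hr₁) (by linear_combination hr₂) (by linear_combination hr₃)
  exact ⟨by linear_combination hA, by linear_combination hB, by linear_combination hC⟩

/-- Coefficients of `(l.1 u₁ + l.2 u₂)(m.1 u₁ + m.2 u₂)(n.1 u₁ + n.2 u₂)`. -/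
def cubicOfLinearForms (l m n : ℝ × ℝ) : Fin 4 → ℝ :=
  ![l.1 * m.1 * n.1, l.1 * m.1 * n.2 + l.1 * m.2 * n.1 + l.2 * m.1 * n.1,
    l.1 * m.2 * n.2 + l.2 * m.1 * n.2 + l.2 * m.2 * n.1, l.2 * m.2 * n.2]

lemma cubicOfLinearForms_smul_smul (l m n : ℝ × ℝ) (β γ : ℝ) :
    cubicOfLinearForms l (β • m) (γ • n) = (β * γ) • cubicOfLinearForms l m n := by
  simp only [cubicOfLinearForms, Prod.smul_fst, Prod.smul_snd, Matrix.smul_cons, smul_eq_mul,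
    Matrix.smul_empty, Matrix.vecCons_inj, and_true]
  refine ⟨?_, ?_, ?_, ?_⟩ <;> ring

lemma Qcoeff_eq_smul_cubicOfLinearForms {c : ℝ} (hc : c ^ 2 = 3) (x y z w : ℝ) :
    Qcoeff x y z w =
      (1 / 3 : ℝ) • cubicOfLinearForms (x, y) (x - c * z, y - c * w) (x + c * z, y + c * w) := by
  simp only [Qcoeff, cubicOfLinearForms, Matrix.smul_cons, smul_eq_mul, Matrix.smul_empty,
    Matrix.vecCons_inj, and_true]
  refine ⟨?_, ?_, ?_, ?_⟩
  · linear_combination x * z ^ 2 / 3 * hc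
  · linear_combination (2 * x * z * w + y * z ^ 2) / 3 * hc
  · linear_combination (x * w ^ 2 + 2 * y * z * w) / 3 * hc
  · linear_combination y * w ^ 2 / 3 * hc

lemma Qcoeff_mul (t x y z w : ℝ) :
    Qcoeff (t * x) (t * y) (t * z) (t * w) = t ^ 3 • Qcoeff x y z w := by
  simp only [Qcoeff, Matrix.smul_cons, smul_eq_mul, Matrix.smul_empty, Matrix.vecCons_inj, and_true]
  refine ⟨?_, ?_, ?_, ?_⟩ <;> ring

lemma exists_Qcoeff_eq_cubicOfLinearForms_add (m n : ℝ × ℝ) :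
    ∃ x y z w, Qcoeff x y z w = (1 / 6 : ℝ) • cubicOfLinearForms (m + n) m n := by
  set c := √3
  have hc : c ^ 2 = 3 := Real.sq_sqrt (by norm_num)
  have hc0 : c ≠ 0 := by positivity
  refine ⟨(m.1 + n.1) / 2, (m.2 + n.2) / 2, (n.1 - m.1) / (2 * c), (n.2 - m.2) / (2 * c), ?_⟩
  rw [Qcoeff_eq_smul_cubicOfLinearForms hc]
  simp only [cubicOfLinearForms, Prod.fst_add, Prod.snd_add, Matrix.smul_cons, smul_eq_mul,
    Matrix.smul_empty, Matrix.vecCons_inj, and_true]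
  refine ⟨?_, ?_, ?_, ?_⟩ <;> field_simp <;> ring

lemma exists_Qcoeff_eq_smul_cubicOfLinearForms_add (k : ℝ) (m n : ℝ × ℝ) :
    ∃ x y z w, Qcoeff x y z w = k • cubicOfLinearForms (m + n) m n := by
  obtain ⟨x, y, z, w, hQ⟩ := exists_Qcoeff_eq_cubicOfLinearForms_add m n
  obtain ⟨t, ht⟩ := exists_pow_three_eq (6 * k)
  refine ⟨t * x, t * y, t * z, t * w, ?_⟩
  rw [Qcoeff_mul, hQ, ht, smul_smul]
  ring_nf

lemma exists_Qcoeff_eq_smul_cubicOfLinearForms {r₁ r₂ r₃ : ℝ} (h₁₂ : r₁ ≠ r₂) (h₁₃ : r₁ ≠ r₃)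
    (h₂₃ : r₂ ≠ r₃) (k : ℝ) :
    ∃ x y z w, Qcoeff x y z w = k • cubicOfLinearForms (1, -r₁) (1, -r₂) (1, -r₃) := by
  have h₂₃' : r₂ - r₃ ≠ 0 := sub_ne_zero.2 h₂₃
  set β := (r₁ - r₃) / (r₂ - r₃)
  set γ := (r₂ - r₁) / (r₂ - r₃)
  have hβγ : β * γ ≠ 0 := by
    have := sub_ne_zero.2 h₁₃; have := sub_ne_zero.2 h₁₂.symm; positivity
  have hsum : β • ((1 : ℝ), -r₂) + γ • ((1 : ℝ), -r₃) = (1, -r₁) := by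
    ext <;> simp only [Prod.smul_mk, smul_eq_mul, Prod.mk_add_mk, β, γ] <;> field_simp <;>
      ring
  obtain ⟨x, y, z, w, hQ⟩ := exists_Qcoeff_eq_smul_cubicOfLinearForms_add (k / (β * γ))
    (β • ((1 : ℝ), -r₂)) (γ • ((1 : ℝ), -r₃))
  refine ⟨x, y, z, w, ?_⟩
  rw [hQ, hsum, cubicOfLinearForms_smul_smul, smul_smul, div_mul_cancel₀ _ hβγ]

lemma exists_eq_smul_cubicOfLinearForms_of_disc3_pos {q : Fin 4 → ℝ} (hq₀ : q 0 ≠ 0)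
    (hd : 0 < disc3 q) : ∃ r₁ r₂ r₃ : ℝ, r₁ ≠ r₂ ∧ r₁ ≠ r₃ ∧ r₂ ≠ r₃ ∧
      q = q 0 • cubicOfLinearForms (1, -r₁) (1, -r₂) (1, -r₃) := by
  set a := q 1 / q 0
  set b := q 2 / q 0
  set c := q 3 / q 0
  have hdisc : disc3 q = q 0 ^ 4 *
      (a ^ 2 * b ^ 2 - 4 * b ^ 3 - 4 * a ^ 3 * c + 18 * a * b * c - 27 * c ^ 2) := by
    simp only [disc3, a, b, c]; field_simp
  obtain ⟨r₁, r₂, r₃, h₁₂, h₂₃, hr₁, hr₂, hr₃⟩ := exists_three_roots_monic_cubic a b c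
    (pos_of_mul_pos_right (hdisc ▸ hd) (by positivity))
  obtain ⟨ha, hb, hc⟩ :=
    cubic_coeffs_eq_of_three_roots h₁₂.ne (h₁₂.trans h₂₃).ne h₂₃.ne hr₁ hr₂ hr₃
  have hq (i : Fin 4) : q 0 * (q i / q 0) = q i := mul_div_cancel₀ (q i) hq₀
  refine ⟨r₁, r₂, r₃, h₁₂.ne, (h₁₂.trans h₂₃).ne, h₂₃.ne, ?_⟩
  ext i; fin_cases i <;> simp only [cubicOfLinearForms, Pi.smul_apply, smul_eq_mul, Fin.isValue,
    Fin.zero_eta, Fin.mk_one, Fin.reduceFinMk, Matrix.cons_val_zero, Matrix.cons_val_one,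
    Matrix.cons_val]
  · ring
  · linear_combination q 0 * ha - hq 1
  · linear_combination q 0 * hb - hq 2
  · linear_combination q 0 * hc - hq 3

/-- Coefficients of `q(u₁, l u₁ + u₂)`. -/
def shear (l : ℝ) (q : Fin 4 → ℝ) : Fin 4 → ℝ :=
  ![q 0 + q 1 * l + q 2 * l ^ 2 + q 3 * l ^ 3, q 1 + 2 * q 2 * l + 3 * q 3 * l ^ 2,
    q 2 + 3 * q 3 * l, q 3]

lemma disc3_shear (l : ℝ) (q : Fin 4 → ℝ) : disc3 (shear l q) = disc3 q := by
  simp only [disc3, shear, Matrix.cons_val_zero, Matrix.cons_val_one, Matrix.cons_val]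
  ring

lemma shear_Qcoeff (l x y z w : ℝ) :
    shear l (Qcoeff x y z w) = Qcoeff (x + l * y) y (z + l * w) w := by
  simp only [shear, Qcoeff, Matrix.cons_val_zero, Matrix.cons_val_one, Matrix.cons_val_two,
    Matrix.cons_val_three, Matrix.head_cons, Matrix.tail_cons, Matrix.vecCons_inj, and_true]
  refine ⟨?_, ?_, ?_⟩ <;> ring

lemma shear_neg_shear (l : ℝ) (q : Fin 4 → ℝ) : shear (-l) (shear l q) = q := by
  ext i; fin_cases i <;> simp only [shear, Fin.isValue, Fin.zero_eta, Fin.mk_one, Fin.reduceFinMk,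
    Matrix.cons_val_zero, Matrix.cons_val_one, Matrix.cons_val] <;> ring

lemma exists_shear_apply_zero_ne_zero {q : Fin 4 → ℝ} (hq : q ≠ 0) : ∃ l, shear l q 0 ≠ 0 := by
  contrapose! hq
  have h₀ := hq 0; have h₁ := hq 1; have h₂ := hq (-1); have h₃ := hq 2
  simp only [shear, Matrix.cons_val_zero] at h₀ h₁ h₂ h₃
  ext i; fin_cases i <;>
    simp only [Pi.zero_apply, Fin.isValue, Fin.zero_eta, Fin.mk_one, Fin.reduceFinMk] <;> linarith

lemma exists_Qcoeff_eq_of_disc3_pos {q : Fin 4 → ℝ} (hd : 0 < disc3 q) :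
    ∃ x y z w, Qcoeff x y z w = q := by
  obtain ⟨l, hl⟩ := exists_shear_apply_zero_ne_zero (q := q) (by rintro rfl; simp [disc3] at hd)
  obtain ⟨r₁, r₂, r₃, h₁₂, h₁₃, h₂₃, hq⟩ :=
    exists_eq_smul_cubicOfLinearForms_of_disc3_pos hl (disc3_shear l q ▸ hd)
  obtain ⟨x, y, z, w, hQ⟩ := exists_Qcoeff_eq_smul_cubicOfLinearForms h₁₂ h₁₃ h₂₃ (shear l q 0)
  refine ⟨x + -l * y, y, z + -l * w, w, ?_⟩
  rw [← shear_Qcoeff, hQ, ← hq, shear_neg_shear]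

lemma disc3_Qcoeff (x y z w : ℝ) : disc3 (Qcoeff x y z w) = 4 / 3 * (x * w - y * z) ^ 6 := by
  simp only [disc3, Qcoeff, Matrix.cons_val_zero, Matrix.cons_val_one, Matrix.cons_val]
  ring

lemma exists_Qcoeff_eq_cube (α β : ℝ) :
    ∃ x y z w, Qcoeff x y z w = ![α ^ 3, 3 * α ^ 2 * β, 3 * α * β ^ 2, β ^ 3] := by
  obtain ⟨c, hc⟩ := exists_pow_three_eq 3
  refine ⟨c * α, c * β, 0, 0, ?_⟩
  simp only [Qcoeff, Matrix.vecCons_inj, and_true]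
  refine ⟨?_, ?_, ?_, ?_⟩
  · linear_combination α ^ 3 / 3 * hc
  · linear_combination α ^ 2 * β * hc
  · linear_combination α * β ^ 2 * hc
  · linear_combination β ^ 3 / 3 * hc

lemma exists_Qcoeff_mul_eq_cube (μ x y : ℝ) :
    ∃ α β : ℝ, Qcoeff x y (μ * x) (μ * y) = ![α ^ 3, 3 * α ^ 2 * β, 3 * α * β ^ 2, β ^ 3] := by
  obtain ⟨e, he⟩ := exists_pow_three_eq (1 / 3 - μ ^ 2)
  refine ⟨e * x, e * y, ?_⟩
  simp only [Qcoeff, Matrix.vecCons_inj, and_true]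
  refine ⟨?_, ?_, ?_, ?_⟩
  · linear_combination -x ^ 3 * he
  · linear_combination -3 * x ^ 2 * y * he
  · linear_combination -3 * x * y ^ 2 * he
  · linear_combination -y ^ 3 * he

lemma exists_Qcoeff_eq_cube_of_mul_eq_mul {x y z w : ℝ} (h : x * w = y * z) :
    ∃ α β : ℝ, Qcoeff x y z w = ![α ^ 3, 3 * α ^ 2 * β, 3 * α * β ^ 2, β ^ 3] := by
  rcases eq_or_ne x 0 with rfl | hx
  · rcases eq_or_ne y 0 with rfl | hy
    · exact ⟨0, 0, by ext i; fin_cases i <;> simp [Qcoeff]⟩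
    · obtain rfl : z = 0 := by simpa [hy] using h.symm
      simpa [hy] using exists_Qcoeff_mul_eq_cube (w / y) 0 y
  · have hz : z = z / x * x := (div_mul_cancel₀ z hx).symm
    have hw : w = z / x * y := by field_simp; linear_combination h
    rw [hz, hw]
    exact exists_Qcoeff_mul_eq_cube _ x y

theorem stmt17 (q : Fin 4 → ℝ) :
    (∃ x y z w : ℝ, Qcoeff x y z w = q) ↔
      (0 < disc3 q ∨ ∃ α β : ℝ, q = ![α ^ 3, 3 * α ^ 2 * β, 3 * α * β ^ 2, β ^ 3]) := by
  constructor
  · rintro ⟨x, y, z, w, rfl⟩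
    by_cases h : x * w = y * z
    · exact Or.inr (exists_Qcoeff_eq_cube_of_mul_eq_mul h)
    · have : x * w - y * z ≠ 0 := sub_ne_zero.2 h
      exact Or.inl (by rw [disc3_Qcoeff]; positivity)
  · rintro (hd | ⟨α, β, rfl⟩)
    · exact exists_Qcoeff_eq_of_disc3_pos hd
    · exact exists_Qcoeff_eq_cube α β
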